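/- Let Y ⊆ Ω_n with |Y| = r ≥ 1. The cardinality of the semigroup POPI_n(Y) equals 1 + r·C(n+r−1, r), where C denotes the binomial coefficient. -/

import Mathlib

/-!
A partial injection with domain `A`, `#A = k ≥ 1`, is determined by the list of its images read
along `A` in increasing order. Injectivity, orientation preservation and `Im ⊆ Y` say exactly
that this list consists of `k` distinct elements of `Y` and is a rotation of a sorted list, so it
is given by a `k`-subset of `Y` together with one of its `k` rotations. Hence
`|POPI_n(Y)| = 1 + ∑ₖ C(n,k) C(r,k) k`, and `k C(r,k) = r C(r-1,k-1)` with Vandermonde's identity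
turns the sum into `r C(n+r-1,r)`.
-/

open scoped Classical

namespace POPIpaper

/-- Partial transformations of `Ω_n = {1,…,n}`, modelled on `Fin n`. -/
abbrev PT (n : ℕ) := Fin n → Option (Fin n)

/-- Composition of partial transformations (apply `α` first, then `β`). -/
def comp {n : ℕ} (α β : PT n) : PT n := fun x => (α x).bind β

/-- Domain of a partial transformation. -/
noncomputable def dom {n : ℕ} (α : PT n) : Finset (Fin n) :=
  Finset.univ.filter (fun x => (α x).isSome)

/-- Image of a partial transformation. -/
noncomputable def im {n : ℕ} (α : PT n) : Finset (Fin n) :=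
  Finset.univ.filter (fun y => ∃ x, α x = some y)

/-- rank(α) = |Im(α)|. -/
noncomputable def rank {n : ℕ} (α : PT n) : ℕ := (im α).card

/-- Injectivity of a partial transformation. -/
def Inj {n : ℕ} (α : PT n) : Prop :=
  ∀ x y z : Fin n, α x = some z → α y = some z → x = y

/-- Orientation-preserving: the sequence of images, taken along the increasing
enumeration of the domain, is cyclic, i.e. some rotation of it is sorted. -/
def OP {n : ℕ} (α : PT n) : Prop :=
  ∃ k : ℕ, (((List.finRange n).filterMap α).rotate k).Pairwise (· ≤ ·)

/-- The semigroup `POPI_n(Y)` as a set of partial transformations: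
injective, orientation-preserving, with image contained in `Y`. -/
def POPI (n : ℕ) (Y : Finset (Fin n)) : Set (PT n) :=
  {α | Inj α ∧ OP α ∧ ∀ x y : Fin n, α x = some y → y ∈ Y}

/-- Regularity of `α` as an element of the subsemigroup `S`. -/
def IsRegularIn {n : ℕ} (S : Set (PT n)) (α : PT n) : Prop :=
  ∃ β ∈ S, comp (comp α β) α = α

/-- The partial identity on a subset `A`. -/
def idp {n : ℕ} (A : Finset (Fin n)) : PT n :=
  fun x => if x ∈ A then some x else none

/-- Fixed points of a partial transformation. -/
noncomputable def fix {n : ℕ} (α : PT n) : Finset (Fin n) :=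
  Finset.univ.filter (fun x => α x = some x)

/-- Green's relation ℒ on the set `S`: `S¹α = S¹β`. -/
def LRel {n : ℕ} (S : Set (PT n)) (α β : PT n) : Prop :=
  (α = β ∨ ∃ γ ∈ S, comp γ β = α) ∧ (β = α ∨ ∃ γ ∈ S, comp γ α = β)

/-- Green's relation ℛ on the set `S`: `αS¹ = βS¹`. -/
def RRel {n : ℕ} (S : Set (PT n)) (α β : PT n) : Prop :=
  (α = β ∨ ∃ γ ∈ S, comp β γ = α) ∧ (β = α ∨ ∃ γ ∈ S, comp α γ = β)

/-- Green's relation ℋ = ℒ ∩ ℛ. -/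
def HRel {n : ℕ} (S : Set (PT n)) (α β : PT n) : Prop :=
  LRel S α β ∧ RRel S α β

/-- Green's relation 𝒟 = ℒ ∘ ℛ. -/
def DRel {n : ℕ} (S : Set (PT n)) (α β : PT n) : Prop :=
  ∃ γ ∈ S, LRel S α γ ∧ RRel S γ β

/-- `Φ` is a semigroup isomorphism from the subsemigroup `S` onto `T`. -/
def IsIso {n : ℕ} (S T : Set (PT n)) (Φ : PT n → PT n) : Prop :=
  Set.BijOn Φ S T ∧ ∀ a ∈ S, ∀ b ∈ S, Φ (comp a b) = comp (Φ a) (Φ b)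

/-- The product `β * l₁ * ⋯ * l_k` of a nonempty list of partial transformations. -/
def prodList {n : ℕ} (β : PT n) (l : List (PT n)) : PT n := l.foldl comp β

end POPIpaper

namespace List

variable {α β : Type*}

theorem map_some_filterMap_of_forall_isSome {f : α → Option β} {l : List α}
    (h : ∀ x ∈ l, (f x).isSome) : (l.filterMap f).map some = l.map f := by
  induction l with
  | nil => rfl
  | cons a l ih =>
    obtain ⟨b, hb⟩ := Option.isSome_iff_exists.mp (h a mem_cons_self)
    simp [filterMap_cons_some hb, hb, ih fun x hx => h x (mem_cons_of_mem a hx)]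

theorem filterMap_getElem?_idxOf [DecidableEq α] {l : List α} {L : List β} (hl : l.Nodup)
    (hlen : l.length = L.length) : l.filterMap (fun x => L[l.idxOf x]?) = L := by
  have hsome : ∀ x ∈ l, (L[l.idxOf x]?).isSome := fun x hx => by
    rw [isSome_getElem?, ← hlen]; exact idxOf_lt_length_iff.mpr hx
  apply map_injective_iff.mpr (Option.some_injective β)
  rw [map_some_filterMap_of_forall_isSome hsome]
  refine ext_getElem (by simp [hlen]) fun i hi _ => ?_
  rw [getElem_map, getElem_map, hl.idxOf_getElem]
  simp

theorem filter_finRange_mem {n : ℕ} (A : Finset (Fin n)) :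
    (finRange n).filter (· ∈ A) = A.sort :=
  ((pairwise_lt_finRange n).filter _).eq_of_mem_iff A.sortedLT_sort.pairwise (by simp)

theorem filterMap_finRange_eq_filterMap_sort {n : ℕ} {f : Fin n → Option β}
    {A : Finset (Fin n)} (h : ∀ x, (f x).isSome → x ∈ A) :
    (finRange n).filterMap f = A.sort.filterMap f := by
  rw [← filter_finRange_mem, filterMap_filter]
  refine filterMap_congr fun x _ => ?_
  by_cases hx : x ∈ A
  · simp [hx]
  · rw [if_neg (by simpa using hx), Option.not_isSome_iff_eq_none.mp (mt (h x) hx)]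

end List

namespace Nat

open Finset

theorem sum_range_choose_succ_mul_choose (n m : ℕ) :
    ∑ i ∈ range n, n.choose (i + 1) * m.choose i = (n + m).choose (m + 1) := by
  cases n with
  | zero => simp
  | succ n =>
    rw [choose_symm_of_eq_add (by ring : n + 1 + m = m + 1 + n),
      show n + 1 + m = m + (n + 1) by ring, add_choose_eq,
      Nat.sum_antidiagonal_eq_sum_range_succ_mk]
    refine sum_congr rfl fun i hi => ?_
    have hin : n + 1 = n - i + (i + 1) := by have := mem_range.mp hi; omega
    rw [mul_comm, choose_symm_of_eq_add hin]

theorem sum_range_choose_succ_mul_choose_succ_mul (n r : ℕ) :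
    ∑ i ∈ range n, n.choose (i + 1) * (r.choose (i + 1) * (i + 1)) =
      r * (n + r - 1).choose r := by
  cases r with
  | zero => simp
  | succ m =>
    simp_rw [← add_one_mul_choose_eq]
    rw [sum_congr rfl fun i _ => mul_left_comm _ (m + 1) _, ← mul_sum,
      sum_range_choose_succ_mul_choose, ← add_assoc, Nat.add_sub_cancel]

end Nat

namespace POPIpaper

open Finset

variable {n : ℕ}

theorem mem_dom {α : PT n} {x : Fin n} : x ∈ dom α ↔ (α x).isSome := by
  simp [dom]

/-- The images of `α` along the increasing enumeration of its domain: `OP α` says that some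
rotation of this list is sorted. -/
def imageSeq (α : PT n) : List (Fin n) := (List.finRange n).filterMap α

theorem imageSeq_eq_filterMap_sort (α : PT n) : imageSeq α = (dom α).sort.filterMap α :=
  List.filterMap_finRange_eq_filterMap_sort fun _ => mem_dom.mpr

theorem map_some_imageSeq (α : PT n) : (imageSeq α).map some = (dom α).sort.map α := by
  rw [imageSeq_eq_filterMap_sort]
  exact List.map_some_filterMap_of_forall_isSome fun x hx => mem_dom.mp ((mem_sort _).mp hx)

theorem length_imageSeq (α : PT n) : (imageSeq α).length = #(dom α) := by
  simpa using congrArg List.length (map_some_imageSeq α)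

theorem mem_imageSeq {α : PT n} {y : Fin n} : y ∈ imageSeq α ↔ ∃ x, α x = some y := by
  simp [imageSeq, List.mem_filterMap]

theorem nodup_imageSeq {α : PT n} (hα : Inj α) : (imageSeq α).Nodup :=
  (List.nodup_finRange n).filterMap fun x y z hx hy => hα x y z hx hy

theorem eq_of_imageSeq_eq {α β : PT n} (hdom : dom α = dom β) (h : imageSeq α = imageSeq β) :
    α = β := by
  funext x
  by_cases hx : x ∈ dom α
  · have hmap := map_some_imageSeq α
    rw [h, map_some_imageSeq, hdom] at hmap
    exact (List.map_inj_left.mp hmap.symm) x ((mem_sort _).mpr (hdom ▸ hx))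
  · have hy : x ∉ dom β := hdom ▸ hx
    rw [mem_dom, Option.not_isSome_iff_eq_none] at hx hy
    rw [hx, hy]

/-- The partial map sending the `i`-th element of `A` to `L[i]`. -/
def ofSeq (A : Finset (Fin n)) (L : List (Fin n)) : PT n := fun x => L[A.sort.idxOf x]?

variable {A : Finset (Fin n)} {L : List (Fin n)}

theorem dom_ofSeq (h : #A = L.length) : dom (ofSeq A L) = A := by
  ext x
  rw [mem_dom, ofSeq, isSome_getElem?, ← h, ← length_sort (r := fun a b : Fin n => a ≤ b),
    List.idxOf_lt_length_iff, mem_sort]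

theorem imageSeq_ofSeq (h : #A = L.length) : imageSeq (ofSeq A L) = L := by
  rw [imageSeq_eq_filterMap_sort, dom_ofSeq h]
  exact List.filterMap_getElem?_idxOf (sort_nodup _ _) (by rw [length_sort, h])

theorem inj_ofSeq (h : #A = L.length) (hL : L.Nodup) : Inj (ofSeq A L) := by
  intro x y z hx hy
  have hlt : A.sort.idxOf x < L.length := (List.getElem?_eq_some_iff.mp hx).1
  have hidx : A.sort.idxOf x = A.sort.idxOf y := (List.getElem?_inj hlt hL).mp (hx.trans hy.symm)
  rw [← h, ← length_sort (r := fun a b : Fin n => a ≤ b)] at hlt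
  exact (List.idxOf_inj (List.idxOf_lt_length_iff.mp hlt)).mp hidx

section CyclicLists

variable {α : Type*} [LinearOrder α]

def cyclicLists (Y : Finset α) (k : ℕ) : Finset (List α) :=
  (Y.powersetCard k ×ˢ range k).image fun p => p.1.sort.rotate p.2

theorem card_cyclicLists (Y : Finset α) (k : ℕ) : #(cyclicLists Y k) = (#Y).choose k * k := by
  rw [cyclicLists, card_image_of_injOn, card_product, card_powersetCard, card_range]
  rintro ⟨B₁, j₁⟩ h₁ ⟨B₂, j₂⟩ h₂ heq
  simp only [coe_product, Set.mem_prod, mem_coe, mem_powersetCard, mem_range] at h₁ h₂ heq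
  obtain rfl : B₁ = B₂ := by
    ext x
    simpa [List.mem_rotate] using congrArg (x ∈ ·) heq
  have hne : B₁.sort ≠ [] := List.ne_nil_of_length_pos (by rw [length_sort, h₁.1.2]; omega)
  have := (sort_nodup B₁ _).rotate_congr hne j₁ j₂ heq
  rw [length_sort, h₁.1.2, Nat.mod_eq_of_lt h₁.2, Nat.mod_eq_of_lt h₂.2] at this
  rw [this]

theorem mem_cyclicLists {Y : Finset α} {k : ℕ} (hk : 0 < k) {L : List α} :
    L ∈ cyclicLists Y k ↔
      L.length = k ∧ L.Nodup ∧ (∀ y ∈ L, y ∈ Y) ∧ ∃ m, (L.rotate m).Pairwise (· ≤ ·) := by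
  constructor
  · intro hL
    obtain ⟨⟨B, j⟩, hBj, rfl⟩ := mem_image.mp hL
    simp only [mem_product, mem_powersetCard, mem_range] at hBj
    obtain ⟨m, hm⟩ := List.IsRotated.forall B.sort j
    refine ⟨by simp [hBj.1.2], List.nodup_rotate.mpr (sort_nodup _ _),
      fun y hy => hBj.1.1 ((mem_sort _).mp (List.mem_rotate.mp hy)), m,
      by rw [hm]; exact pairwise_sort _ _⟩
  · rintro ⟨hlen, hnd, hY, m, hm⟩
    have hsort : L.rotate m = L.toFinset.sort := by
      rw [← (List.toFinset_sort _ (List.nodup_rotate.mpr hnd)).mpr hm]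
      congr 1
      ext x
      simp [List.mem_rotate]
    have hcard : #L.toFinset = k := by rw [List.toFinset_card_of_nodup hnd, hlen]
    refine mem_image.mpr ⟨(L.toFinset, (k - m % k) % k), ?_, ?_⟩
    · simp only [mem_product, mem_powersetCard, mem_range]
      exact ⟨⟨fun y hy => hY y (List.mem_toFinset.mp hy), hcard⟩, Nat.mod_lt _ hk⟩
    · have hsortlen : L.toFinset.sort.length = k := by rw [length_sort, hcard]
      have hL := List.rotate_eq_iff.mp hsort
      rw [hsortlen] at hL
      have hmod := List.rotate_mod L.toFinset.sort (k - m % k)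
      rw [hsortlen] at hmod
      exact hmod.trans hL.symm

end CyclicLists

theorem dom_eq_empty_iff {α : PT n} : dom α = ∅ ↔ α = fun _ => none := by
  simp [Finset.eq_empty_iff_forall_notMem, mem_dom, funext_iff]

noncomputable def domFiber (Y A : Finset (Fin n)) : Finset (PT n) :=
  {α | α ∈ POPI n Y ∧ dom α = A}

theorem domFiber_empty (Y : Finset (Fin n)) : domFiber Y ∅ = {fun _ => none} := by
  ext α
  simp only [domFiber, mem_filter, mem_univ, true_and, mem_singleton, dom_eq_empty_iff]
  refine ⟨And.right, ?_⟩
  rintro rfl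
  exact ⟨⟨by simp [Inj], ⟨0, by simp⟩, by simp⟩, rfl⟩

theorem card_domFiber_of_nonempty (Y : Finset (Fin n)) (hA : A.Nonempty) :
    #(domFiber Y A) = (#Y).choose #A * #A := by
  rw [← card_cyclicLists]
  refine card_bij (fun α _ => imageSeq α) ?_ ?_ ?_
  · intro α hα
    simp only [domFiber, mem_filter, mem_univ, true_and] at hα
    obtain ⟨⟨hinj, hop, hY⟩, rfl⟩ := hα
    rw [mem_cyclicLists hA.card_pos]
    refine ⟨length_imageSeq α, nodup_imageSeq hinj, fun y hy => ?_, hop⟩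
    obtain ⟨x, hx⟩ := mem_imageSeq.mp hy
    exact hY x y hx
  · intro α hα β hβ h
    simp only [domFiber, mem_filter, mem_univ, true_and] at hα hβ
    exact eq_of_imageSeq_eq (hα.2.trans hβ.2.symm) h
  · intro L hL
    obtain ⟨hlen, hnd, hY, m, hm⟩ := (mem_cyclicLists hA.card_pos).mp hL
    have hseq := imageSeq_ofSeq hlen.symm
    refine ⟨ofSeq A L, ?_, hseq⟩
    simp only [domFiber, mem_filter, mem_univ, true_and]
    refine ⟨⟨inj_ofSeq hlen.symm hnd, ⟨m, ?_⟩, fun x y hxy => ?_⟩, dom_ofSeq hlen.symm⟩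
    · rw [← hseq] at hm
      exact hm
    · exact hY y (hseq ▸ mem_imageSeq.mpr ⟨x, hxy⟩)

theorem card_domFiber (Y A : Finset (Fin n)) :
    #(domFiber Y A) = if #A = 0 then 1 else (#Y).choose #A * #A := by
  rcases A.eq_empty_or_nonempty with rfl | hA
  · simp [domFiber_empty]
  · rw [if_neg hA.card_pos.ne', card_domFiber_of_nonempty Y hA]

theorem ncard_POPI_eq_sum_card_domFiber (Y : Finset (Fin n)) :
    (POPI n Y).ncard = ∑ A : Finset (Fin n), #(domFiber Y A) := by
  rw [show POPI n Y = ↑({α | α ∈ POPI n Y} : Finset (PT n)) by simp, Set.ncard_coe_finset,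
    card_eq_sum_card_fiberwise (f := dom) (t := univ) (by simp)]
  simp [domFiber, filter_filter]

theorem card_POPI_general {n r : ℕ} (Y : Finset (Fin n)) (hr : Y.card = r) :
    Set.ncard (POPI n Y) = 1 + r * (n + r - 1).choose r := by
  rw [ncard_POPI_eq_sum_card_domFiber, ← powerset_univ]
  simp_rw [card_domFiber, hr]
  rw [sum_powerset_apply_card (fun k => if k = 0 then 1 else r.choose k * k), card_univ,
    Fintype.card_fin, sum_range_succ', ← Nat.sum_range_choose_succ_mul_choose_succ_mul]
  simp [add_comm]

/-- `|POPI_n(Y)| = 1 + r·C(n+r-1, r)` where `r = |Y|`. -/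
theorem card_POPI {n r : ℕ} (Y : Finset (Fin n)) (hr : Y.card = r) (h1 : 1 ≤ r) :
    Set.ncard (POPI n Y) = 1 + r * (n + r - 1).choose r :=
  card_POPI_general Y hr

end POPIpaper
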